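/- Let (V,C) be a linear relation. If there is a subspace U with C^♯ = C^♭ ⊕ U and (U, C|_U) automorphic, then C|_{C^♯} = C|_{C^♭} ⊕ C|_U as subspaces of V ⊕ V; consequently the exact sequence 0 → (C^♭, C|_{C^♭}) → (C^♯, C|_{C^♯}) → (C^♯/C^♭, quotient relation) → 0 splits as Kronecker modules. -/

import Mathlib

/-! Given `(x, y) ∈ C` with `x, y ∈ C^♯`, split `x = f + u` along `C^♭ ⊕ U` and pick `w ∈ U`
with `(u, w) ∈ C`. Then `(f, y - w) ∈ C` with `f ∈ C^♭` and `y - w ∈ C^♯`, so `y - w ∈ C^♭` because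
`C^♯ ∩ C C^♭ = C^♭`. This decomposes `C|_{C^♯}`, and it shows that the projection of `C^♯` onto
`C^♭` along `U` preserves `C`, which splits the sequence. -/

variable {K : Type*} [Field K]

section Defs
variable {V : Type*} [AddCommGroup V] [Module K V]

/-- A ℤ-indexed chain through the relation `C`. -/
def IsCChain (C : Submodule K (V × V)) (f : ℤ → V) : Prop :=
  ∀ n : ℤ, (f n, f (n + 1)) ∈ C

/-- `C^♯`: elements lying on a bi-infinite chain. -/
def csharp (C : Submodule K (V × V)) : Set V :=
  {v | ∃ f : ℤ → V, IsCChain C f ∧ f 0 = v}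

/-- `C₊`: elements lying on a bi-infinite chain which is eventually zero to the right. -/
def cplus (C : Submodule K (V × V)) : Set V :=
  {v | ∃ f : ℤ → V, IsCChain C f ∧ f 0 = v ∧ ∃ N : ℤ, ∀ n ≥ N, f n = 0}

/-- `C₋`: elements lying on a bi-infinite chain which is eventually zero to the left. -/
def cminus (C : Submodule K (V × V)) : Set V :=
  {v | ∃ f : ℤ → V, IsCChain C f ∧ f 0 = v ∧ ∃ N : ℤ, ∀ n ≤ N, f n = 0}

/-- `C^♭ = C₊ + C₋`. -/
def cflat (C : Submodule K (V × V)) : Set V :=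
  {v | ∃ a ∈ cplus C, ∃ b ∈ cminus C, v = a + b}

end Defs

namespace IsCChain

variable {V : Type*} [AddCommGroup V] [Module K V] {C : Submodule K (V × V)} {f g : ℤ → V}

theorem add (hf : IsCChain C f) (hg : IsCChain C g) : IsCChain C (f + g) :=
  fun n => C.add_mem (hf n) (hg n)

theorem sub (hf : IsCChain C f) (hg : IsCChain C g) : IsCChain C (f - g) :=
  fun n => C.sub_mem (hf n) (hg n)

theorem shift (hf : IsCChain C f) (k : ℤ) : IsCChain C (fun n => f (n + k)) := fun n => by
  simpa only [add_right_comm n 1 k] using hf (n + k)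

end IsCChain

section Chains

variable {V : Type*} [AddCommGroup V] [Module K V] {C : Submodule K (V × V)} {v w : V}

theorem cplus_subset_csharp : cplus C ⊆ csharp C :=
  fun _ ⟨f, hf, hf0, _⟩ => ⟨f, hf, hf0⟩

theorem cminus_subset_csharp : cminus C ⊆ csharp C :=
  fun _ ⟨f, hf, hf0, _⟩ => ⟨f, hf, hf0⟩

theorem sub_mem_csharp (hv : v ∈ csharp C) (hw : w ∈ csharp C) : v - w ∈ csharp C := by
  obtain ⟨f, hf, rfl⟩ := hv
  obtain ⟨g, hg, rfl⟩ := hw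
  exact ⟨f - g, hf.sub hg, rfl⟩

theorem add_mem_cminus (hv : v ∈ cminus C) (hw : w ∈ cminus C) : v + w ∈ cminus C := by
  obtain ⟨f, hf, rfl, N, hN⟩ := hv
  obtain ⟨g, hg, rfl, M, hM⟩ := hw
  refine ⟨f + g, hf.add hg, rfl, min N M, fun n hn => ?_⟩
  simp [hN n (by omega), hM n (by omega)]

theorem exists_rel_mem_cplus (hv : v ∈ cplus C) : ∃ w ∈ cplus C, (v, w) ∈ C := by
  obtain ⟨f, hf, rfl, N, hN⟩ := hv
  refine ⟨f 1, ⟨fun n => f (n + 1), hf.shift 1, by simp, N, fun n hn => hN _ (by omega)⟩, hf 0⟩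

theorem exists_rel_mem_cminus (hv : v ∈ cminus C) : ∃ w ∈ cminus C, (v, w) ∈ C := by
  obtain ⟨f, hf, rfl, N, hN⟩ := hv
  refine ⟨f 1, ⟨fun n => f (n + 1), hf.shift 1, by simp, N - 1, fun n hn => hN _ (by omega)⟩, hf 0⟩

/-- Cutting off a chain through `w` to the left of `w` leaves a chain, since `(0, w) ∈ C`. -/
theorem mem_cminus_of_zero_rel (h0 : ((0 : V), w) ∈ C) (hw : w ∈ csharp C) : w ∈ cminus C := by
  obtain ⟨f, hf, rfl⟩ := hw
  refine ⟨fun n => if 0 ≤ n then f n else 0, fun n => ?_, if_pos le_rfl, -1,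
    fun n hn => if_neg (by omega)⟩
  rcases lt_trichotomy n (-1) with hn | rfl | hn
  · simp only [show ¬0 ≤ n by omega, show ¬0 ≤ n + 1 by omega, if_false]
    exact C.zero_mem
  · simpa using h0
  · simpa [show 0 ≤ n by omega, show 0 ≤ n + 1 by omega] using hf n

/-- `C^♯ ∩ C C^♭ = C^♭`: write `v = a + b` and move `a`, `b` one step along their chains to
`a'`, `b'`; then `(0, w - a' - b') ∈ C`, so `w - a' - b' ∈ C₋`. -/
theorem mem_cflat_of_rel (hv : v ∈ cflat C) (hvw : (v, w) ∈ C) (hw : w ∈ csharp C) :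
    w ∈ cflat C := by
  obtain ⟨a, ha, b, hb, rfl⟩ := hv
  obtain ⟨a', ha', haa'⟩ := exists_rel_mem_cplus ha
  obtain ⟨b', hb', hbb'⟩ := exists_rel_mem_cminus hb
  have h0 : ((0 : V), w - a' - b') ∈ C := by
    simpa using C.sub_mem (C.sub_mem hvw haa') hbb'
  have hrest : w - a' - b' ∈ cminus C := mem_cminus_of_zero_rel h0 <|
    sub_mem_csharp (sub_mem_csharp hw (cplus_subset_csharp ha')) (cminus_subset_csharp hb')
  exact ⟨a', ha', w - a' - b' + b', add_mem_cminus hrest hb', by abel⟩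

end Chains

namespace Submodule

variable {R V : Type*} [Ring R] [AddCommGroup V] [Module R V] {C : Submodule R (V × V)}
  {F U : Submodule R V}

theorem exists_retraction_of_disjoint (h : Disjoint F U) :
    ∃ r : ↥(F ⊔ U) →ₗ[R] F,
      ∀ x : ↥(F ⊔ U), ∀ f ∈ F, ∀ u ∈ U, (x : V) = f + u → (r x : V) = f := by
  set q := U.comap (F ⊔ U).subtype
  have hcompl : IsCompl (LinearMap.range (inclusion (le_sup_left : F ≤ F ⊔ U))) q := by
    rw [range_inclusion]
    refine ⟨disjoint_def.mpr fun x hF hU => Subtype.ext (disjoint_def.mp h _ hF hU), ?_⟩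
    rw [codisjoint_iff, eq_top_iff]
    rintro ⟨x, hx⟩ -
    obtain ⟨f, hf, u, hu, rfl⟩ := mem_sup.mp hx
    exact mem_sup.mpr ⟨⟨f, mem_sup_left hf⟩, hf, ⟨u, mem_sup_right hu⟩, hu, rfl⟩
  refine ⟨LinearMap.linearProjOfIsCompl q _ (inclusion_injective _) hcompl,
    fun x f hf u hu hx => ?_⟩
  obtain rfl : x = inclusion le_sup_left ⟨f, hf⟩ + ⟨u, mem_sup_right hu⟩ := Subtype.ext hx
  have hu' : (⟨u, mem_sup_right hu⟩ : ↥(F ⊔ U)) ∈ q := hu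
  simp [LinearMap.linearProjOfIsCompl_apply_right' _ _ _ _ _ hu']

theorem inf_prod_sup_eq_sup_inf_prod (hF : ∀ x y, x ∈ F → (x, y) ∈ C → y ∈ F ⊔ U → y ∈ F)
    (hU : ∀ u ∈ U, ∃ w ∈ U, (u, w) ∈ C) :
    C ⊓ (F ⊔ U).prod (F ⊔ U) = C ⊓ F.prod F ⊔ C ⊓ U.prod U := by
  refine le_antisymm ?_ (sup_le (inf_le_inf_left C (prod_mono le_sup_left le_sup_left))
    (inf_le_inf_left C (prod_mono le_sup_right le_sup_right)))
  rintro ⟨x, y⟩ ⟨hxy, hx, hy⟩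
  obtain ⟨f, hf, u, hu, rfl⟩ := mem_sup.mp hx
  obtain ⟨w, hw, huw⟩ := hU u hu
  have hfy : (f, y - w) ∈ C := by simpa using C.sub_mem hxy huw
  have hyw : y - w ∈ F := hF f _ hf hfy (sub_mem hy (mem_sup_right hw))
  exact mem_sup.mpr ⟨(f, y - w), ⟨hfy, hf, hyw⟩, (u, w), ⟨huw, hu, hw⟩, by simp⟩

theorem disjoint_inf_prod_of_disjoint (h : Disjoint F U) :
    Disjoint (C ⊓ F.prod F) (C ⊓ U.prod U) := by
  have hprod : Disjoint (F.prod F) (U.prod U) := by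
    rw [disjoint_iff, prod_inf_prod, h.eq_bot, prod_bot]
  exact hprod.mono inf_le_right inf_le_right

end Submodule

theorem split_relation_decomposition_general
    {V : Type*} [AddCommGroup V] [Module K V] (C : Submodule K (V × V))
    (Ssharp Sflat U : Submodule K V)
    (hSs : (Ssharp : Set V) = csharp C) (hSf : (Sflat : Set V) = cflat C)
    (hsum : Sflat ⊔ U = Ssharp) (hdisj : Disjoint Sflat U) (hle : Sflat ≤ Ssharp)
    (haut1 : ∀ u ∈ U, ∃! w, w ∈ U ∧ (u, w) ∈ C) :
    (C ⊓ Submodule.prod Ssharp Ssharp =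
      (C ⊓ Submodule.prod Sflat Sflat) ⊔ (C ⊓ Submodule.prod U U)) ∧
    Disjoint (C ⊓ Submodule.prod Sflat Sflat) (C ⊓ Submodule.prod U U) ∧
    ∃ r : ↥Ssharp →ₗ[K] ↥Sflat,
      (∀ v : ↥Sflat, r (Submodule.inclusion hle v) = v) ∧
      (∀ x y : ↥Ssharp, ((x : V), (y : V)) ∈ C → ((r x : V), (r y : V)) ∈ C) := by
  subst hsum
  have hflat : ∀ x y, x ∈ Sflat → (x, y) ∈ C → y ∈ Sflat ⊔ U → y ∈ Sflat := by
    intro x y hx hxy hy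
    rw [← SetLike.mem_coe, hSf] at hx ⊢
    rw [← SetLike.mem_coe, hSs] at hy
    exact mem_cflat_of_rel hx hxy hy
  have hdecomp := Submodule.inf_prod_sup_eq_sup_inf_prod hflat fun u hu => (haut1 u hu).exists
  obtain ⟨r, hr⟩ := Submodule.exists_retraction_of_disjoint hdisj
  refine ⟨hdecomp, Submodule.disjoint_inf_prod_of_disjoint hdisj, r,
    fun v => Subtype.ext (hr _ v v.2 0 (zero_mem U) (add_zero _).symm), fun x y hxy => ?_⟩
  have hmem : ((x : V), (y : V)) ∈ C ⊓ (Sflat ⊔ U).prod (Sflat ⊔ U) := ⟨hxy, x.2, y.2⟩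
  rw [hdecomp] at hmem
  obtain ⟨p, ⟨hp, hp₁, hp₂⟩, q, ⟨-, hq₁, hq₂⟩, hpq⟩ := Submodule.mem_sup.mp hmem
  rw [hr x p.1 hp₁ q.1 hq₁ (congrArg Prod.fst hpq).symm,
    hr y p.2 hp₂ q.2 hq₂ (congrArg Prod.snd hpq).symm]
  exact hp

/-- If `C^♯ = C^♭ ⊕ U` with `(U, C|_U)` automorphic, then
`C|_{C^♯} = C|_{C^♭} ⊕ C|_U` as subspaces of `V ⊕ V`; consequently the exact
sequence `0 → (C^♭,C|_{C^♭}) → (C^♯,C|_{C^♯}) → (C^♯/C^♭, ⋅) → 0` of Kronecker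
modules splits, i.e. the inclusion of `(C^♭, C|_{C^♭})` admits a retraction of
relations. Here `Ssharp`, `Sflat` are the subspaces underlying `C^♯`, `C^♭`. -/
theorem split_relation_decomposition
    {V : Type*} [AddCommGroup V] [Module K V] (C : Submodule K (V × V))
    (Ssharp Sflat U : Submodule K V)
    (hSs : (Ssharp : Set V) = csharp C) (hSf : (Sflat : Set V) = cflat C)
    (hsum : Sflat ⊔ U = Ssharp) (hdisj : Disjoint Sflat U) (hle : Sflat ≤ Ssharp)
    (haut1 : ∀ u ∈ U, ∃! w, w ∈ U ∧ (u, w) ∈ C)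
    (haut2 : ∀ w ∈ U, ∃! u, u ∈ U ∧ (u, w) ∈ C) :
    (C ⊓ Submodule.prod Ssharp Ssharp =
      (C ⊓ Submodule.prod Sflat Sflat) ⊔ (C ⊓ Submodule.prod U U)) ∧
    Disjoint (C ⊓ Submodule.prod Sflat Sflat) (C ⊓ Submodule.prod U U) ∧
    ∃ r : ↥Ssharp →ₗ[K] ↥Sflat,
      (∀ v : ↥Sflat, r (Submodule.inclusion hle v) = v) ∧
      (∀ x y : ↥Ssharp, ((x : V), (y : V)) ∈ C → ((r x : V), (r y : V)) ∈ C) :=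
  split_relation_decomposition_general C Ssharp Sflat U hSs hSf hsum hdisj hle haut1
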